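/- Let p and Q be nonzero complex numbers. Then the quantum R matrix Ř⁴ is invertible and the Matveev Δ–∇ braid identity holds: (Ř⁴ ⊗ I₄)(I₄ ⊗ Ř⁴)^{−1}(Ř⁴ ⊗ I₄) = (I₄ ⊗ Ř⁴)(Ř⁴ ⊗ I₄)^{−1}(I₄ ⊗ Ř⁴), an identity of 64×64 complex matrices, so the braid-group representation generated by Ř⁴ cannot distinguish the braids σ₁σ₂^{−1}σ₁ and σ₂σ₁^{−1}σ₂. -/

import Mathlib

/-!
`Ř⁴` is a monomial matrix over the flip of `ℂ⁴ ⊗ ℂ⁴`: it sends `v_b ⊗ v_a` to `c_{ab} v_a ⊗ v_b`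
with every `c_{ab} ≠ 0`. Monomial matrices multiply by composing their permutations and
multiplying their weights, so both sides of the identity are monomial over the permutation
reversing the three tensor factors, with weight `c_{ab} c_{bc} / c_{ca}` at `(a, b, c)`; only the
order of the factors differs, and ℂ is commutative.
-/

open Matrix

noncomputable section

/-- The elementary matrix `E(a,b;c,d)` on `ℂ⁴ ⊗ ℂ⁴`. -/
def E (a b c d : Fin 4) : Matrix (Fin 4 × Fin 4) (Fin 4 × Fin 4) ℂ :=
  Matrix.single (a, b) (c, d) 1

/-- `M ⊗ I₄`, acting on the first two factors of `ℂ⁴ ⊗ ℂ⁴ ⊗ ℂ⁴`. -/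
def op12 (M : Matrix (Fin 4 × Fin 4) (Fin 4 × Fin 4) ℂ) :
    Matrix (Fin 4 × Fin 4 × Fin 4) (Fin 4 × Fin 4 × Fin 4) ℂ :=
  Matrix.of fun x y => M (x.1, x.2.1) (y.1, y.2.1) * (if x.2.2 = y.2.2 then 1 else 0)

/-- `I₄ ⊗ M`, acting on the last two factors of `ℂ⁴ ⊗ ℂ⁴ ⊗ ℂ⁴`. -/
def op23 (M : Matrix (Fin 4 × Fin 4) (Fin 4 × Fin 4) ℂ) :
    Matrix (Fin 4 × Fin 4 × Fin 4) (Fin 4 × Fin 4 × Fin 4) ℂ :=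
  Matrix.of fun x y => (if x.1 = y.1 then 1 else 0) * M (x.2.1, x.2.2) (y.2.1, y.2.2)

/-- The left quantum partial trace `T(C, M)_{a,b} = Σ_{c,d} C_{d,c} M_{(c,a),(d,b)}`. -/
def ptrace (C : Matrix (Fin 4) (Fin 4) ℂ) (M : Matrix (Fin 4 × Fin 4) (Fin 4 × Fin 4) ℂ) :
    Matrix (Fin 4) (Fin 4) ℂ :=
  Matrix.of fun a b => ∑ c : Fin 4, ∑ d : Fin 4, C d c * M (c, a) (d, b)

/-- The quantum R matrix `Ř⁴` (Case 4), with complex parameters `p, Q`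
(indices shifted from 1–4 to 0–3). -/
def R4 (p Q : ℂ) : Matrix (Fin 4 × Fin 4) (Fin 4 × Fin 4) ℂ :=
  E 0 0 0 0
  - (p ^ 2 * Q⁻¹ ^ 2) • (E 1 1 1 1 + E 2 2 2 2)
  + (p ^ 4) • E 3 3 3 3
  + (p * Q⁻¹) • (E 0 1 1 0 + E 0 2 2 0 + E 1 0 0 1 + E 2 0 0 2)
  + (p ^ 3 * Q⁻¹) • (E 1 3 3 1 + E 2 3 3 2 + E 3 1 1 3 + E 3 2 2 3)
  + (p ^ 2 * Q⁻¹ ^ 2) • (E 0 3 3 0 + E 3 0 0 3)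
  - (p ^ 2) • (E 1 2 2 1 + E 2 1 1 2)

section Monomial

variable {n R : Type*} [DecidableEq n] [Fintype n]

def monomialMatrix [Zero R] (σ : n → n) (w : n → R) : Matrix n n R :=
  of fun x y => if y = σ x then w x else 0

theorem monomialMatrix_mul [NonUnitalNonAssocSemiring R] (σ τ : n → n) (w v : n → R) :
    monomialMatrix σ w * monomialMatrix τ v =
      monomialMatrix (τ ∘ σ) (fun x => w x * v (σ x)) := by
  ext x y
  rw [mul_apply, Finset.sum_eq_single (σ x)]
  · by_cases h : y = τ (σ x) <;> simp [monomialMatrix, h]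
  · intro z _ hz
    simp [monomialMatrix, hz]
  · simp

omit [Fintype n] in
theorem monomialMatrix_id_one [Zero R] [One R] :
    monomialMatrix (id : n → n) 1 = (1 : Matrix n n R) := by
  ext x y
  simp [monomialMatrix, one_apply, eq_comm]

theorem monomialMatrix_mul_eq_one [NonAssocSemiring R] {σ τ : n → n} {w v : n → R}
    (hστ : ∀ x, τ (σ x) = x) (hwv : ∀ x, w x * v (σ x) = 1) :
    monomialMatrix σ w * monomialMatrix τ v = 1 := by
  rw [monomialMatrix_mul, ← monomialMatrix_id_one]
  congr <;> funext x
  exacts [hστ x, hwv x]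

end Monomial

section Flip

variable {α K : Type*} [DecidableEq α] [Fintype α] [Field K]

def flipMatrix (f : α → α → K) : Matrix (α × α) (α × α) K :=
  monomialMatrix Prod.swap fun x => f x.1 x.2

theorem flipMatrix_mul_flipMatrix_inv {f : α → α → K} (hf : ∀ a b, f a b ≠ 0) :
    flipMatrix f * flipMatrix (fun a b => (f b a)⁻¹) = 1 :=
  monomialMatrix_mul_eq_one (fun _ => rfl) fun x => mul_inv_cancel₀ (hf x.1 x.2)

theorem isUnit_flipMatrix {f : α → α → K} (hf : ∀ a b, f a b ≠ 0) : IsUnit (flipMatrix f) :=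
  (isUnit_iff_isUnit_det _).mpr (isUnit_det_of_right_inverse (flipMatrix_mul_flipMatrix_inv hf))

end Flip

section Fin4

variable (f : Fin 4 → Fin 4 → ℂ)

theorem op12_flipMatrix :
    op12 (flipMatrix f) =
      monomialMatrix (fun x => (x.2.1, x.1, x.2.2)) fun x => f x.1 x.2.1 := by
  ext ⟨a, b, c⟩ ⟨x, y, z⟩
  simp only [op12, flipMatrix, monomialMatrix, of_apply, Prod.swap_prod_mk, Prod.mk.injEq]
  split_ifs <;> simp_all

theorem op23_flipMatrix :
    op23 (flipMatrix f) =
      monomialMatrix (fun x => (x.1, x.2.2, x.2.1)) fun x => f x.2.1 x.2.2 := by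
  ext ⟨a, b, c⟩ ⟨x, y, z⟩
  simp only [op23, flipMatrix, monomialMatrix, of_apply, Prod.swap_prod_mk, Prod.mk.injEq]
  split_ifs <;> simp_all

variable {f}

theorem inv_op12_flipMatrix (hf : ∀ a b, f a b ≠ 0) :
    (op12 (flipMatrix f))⁻¹ = op12 (flipMatrix fun a b => (f b a)⁻¹) := by
  refine inv_eq_right_inv ?_
  rw [op12_flipMatrix, op12_flipMatrix]
  exact monomialMatrix_mul_eq_one (fun _ => rfl) fun x => mul_inv_cancel₀ (hf x.1 x.2.1)

theorem inv_op23_flipMatrix (hf : ∀ a b, f a b ≠ 0) :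
    (op23 (flipMatrix f))⁻¹ = op23 (flipMatrix fun a b => (f b a)⁻¹) := by
  refine inv_eq_right_inv ?_
  rw [op23_flipMatrix, op23_flipMatrix]
  exact monomialMatrix_mul_eq_one (fun _ => rfl) fun x => mul_inv_cancel₀ (hf x.2.1 x.2.2)

theorem flipMatrix_matveev (hf : ∀ a b, f a b ≠ 0) :
    op12 (flipMatrix f) * (op23 (flipMatrix f))⁻¹ * op12 (flipMatrix f) =
      op23 (flipMatrix f) * (op12 (flipMatrix f))⁻¹ * op23 (flipMatrix f) := by
  rw [inv_op12_flipMatrix hf, inv_op23_flipMatrix hf]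
  simp only [op12_flipMatrix, op23_flipMatrix, monomialMatrix_mul]
  congr 1
  funext x
  simp only [Function.comp_apply]
  ring

end Fin4

def R4Coeff (p Q : ℂ) : Fin 4 → Fin 4 → ℂ :=
  ![![1, p * Q⁻¹, p * Q⁻¹, p ^ 2 * Q⁻¹ ^ 2],
    ![p * Q⁻¹, -(p ^ 2 * Q⁻¹ ^ 2), -(p ^ 2), p ^ 3 * Q⁻¹],
    ![p * Q⁻¹, -(p ^ 2), -(p ^ 2 * Q⁻¹ ^ 2), p ^ 3 * Q⁻¹],
    ![p ^ 2 * Q⁻¹ ^ 2, p ^ 3 * Q⁻¹, p ^ 3 * Q⁻¹, p ^ 4]]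

theorem R4Coeff_ne_zero {p Q : ℂ} (hp : p ≠ 0) (hQ : Q ≠ 0) (a b : Fin 4) :
    R4Coeff p Q a b ≠ 0 := by
  fin_cases a <;> fin_cases b <;> simp [R4Coeff, hp, hQ]

theorem R4_eq_flipMatrix (p Q : ℂ) : R4 p Q = flipMatrix (R4Coeff p Q) := by
  ext ⟨a, b⟩ ⟨x, y⟩
  simp only [R4, E, flipMatrix, monomialMatrix, Matrix.add_apply, Matrix.sub_apply,
    Matrix.smul_apply, of_apply, Prod.swap_prod_mk, single_apply, Prod.mk.injEq, smul_eq_mul]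
  fin_cases a <;> fin_cases b <;> fin_cases x <;> fin_cases y <;> simp [R4Coeff]

/-- `Ř⁴` is invertible and satisfies the Matveev Δ–∇ braid identity
`(Ř⁴ ⊗ I)(I ⊗ Ř⁴)⁻¹(Ř⁴ ⊗ I) = (I ⊗ Ř⁴)(Ř⁴ ⊗ I)⁻¹(I ⊗ Ř⁴)`. -/
theorem R4_Matveev (p Q : ℂ) (hp : p ≠ 0) (hQ : Q ≠ 0) :
    IsUnit (R4 p Q) ∧
    op12 (R4 p Q) * (op23 (R4 p Q))⁻¹ * op12 (R4 p Q) =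
      op23 (R4 p Q) * (op12 (R4 p Q))⁻¹ * op23 (R4 p Q) := by
  have hc := R4Coeff_ne_zero hp hQ
  rw [R4_eq_flipMatrix]
  exact ⟨isUnit_flipMatrix hc, flipMatrix_matveev hc⟩
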